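/- arXiv:2507.19967 — 2 statements merged into one kernel-verified Lean document; each statement's English description precedes it below -/
import Mathlib

section
/- Let (X, d) be a metric space, F : X → X a 1-Lipschitz map, z0 ∈ X, and let (n_k) be a record sequence for n ↦ d(F^n(z0), z0). Let (m_k) be a sequence with m_k ≤ n_k for all k. Suppose for each k there is a point w_k ∈ X lying on a geodesic segment from F^{n_k}(z0) to F^{m_k}(z0), meaning d(F^{m_k}(z0), F^{n_k}(z0)) = d(F^{m_k}(z0), w_k) + d(w_k, F^{n_k}(z0)), and suppose d(z0, w_k) ≤ C for all k. Then d(F^{m_k}(z0), w_k) ≤ C for all k; in particular d(F^{m_k}(z0), z0) ≤ 2C for all k. -/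
/-!
Since `F` is `1`-Lipschitz, `d(F^m z₀, F^n z₀) ≤ d(z₀, F^(n-m) z₀)`, and the record property of `n`
bounds the latter by `d(F^n z₀, z₀)`. So the geodesic from `F^m z₀` to `F^n z₀` is no longer than
the distance from its endpoint `F^n z₀` to `z₀`; subtracting the common piece from `w` to `F^n z₀`
and using the triangle inequality through `w` gives `d(F^m z₀, w) ≤ d(z₀, w) ≤ C`.
-/

theorem LipschitzWith.dist_iterate_le_dist_iterate_sub {X : Type*} [PseudoMetricSpace X]
    {F : X → X} (hF : LipschitzWith 1 F) (z : X) {m n : ℕ} (hmn : m ≤ n) :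
    dist (F^[m] z) (F^[n] z) ≤ dist z (F^[n - m] z) := by
  have hsplit : F^[n] z = F^[m] (F^[n - m] z) := by
    rw [← Function.iterate_add_apply, Nat.add_sub_cancel' hmn]
  simpa [hsplit] using (hF.iterate m).dist_le_mul z (F^[n - m] z)

theorem dist_le_dist_of_dist_eq_add_of_dist_le {X : Type*} [PseudoMetricSpace X]
    {a b w z : X} (hw : dist a b = dist a w + dist w b) (hab : dist a b ≤ dist b z) :
    dist a w ≤ dist z w := by
  linarith [dist_triangle b w z, dist_comm b w, dist_comm w z]

theorem bharali_maitra_core {X : Type*} [MetricSpace X] (F : X → X)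
    (hF : ∀ x y : X, dist (F x) (F y) ≤ dist x y) (z0 : X) (nk mk : ℕ → ℕ)
    (hrec : ∀ k, ∀ m ≤ nk k, dist (F^[m] z0) z0 ≤ dist (F^[nk k] z0) z0)
    (hm : ∀ k, mk k ≤ nk k) (w : ℕ → X) (C : ℝ)
    (hgeo : ∀ k, dist (F^[mk k] z0) (F^[nk k] z0)
        = dist (F^[mk k] z0) (w k) + dist (w k) (F^[nk k] z0))
    (hw : ∀ k, dist z0 (w k) ≤ C) :
    (∀ k, dist (F^[mk k] z0) (w k) ≤ C) ∧ ∀ k, dist (F^[mk k] z0) z0 ≤ 2 * C := by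
  have hnear : ∀ k, dist (F^[mk k] z0) (w k) ≤ C := fun k => by
    have hsegment : dist (F^[mk k] z0) (F^[nk k] z0) ≤ dist (F^[nk k] z0) z0 :=
      calc dist (F^[mk k] z0) (F^[nk k] z0)
          ≤ dist z0 (F^[nk k - mk k] z0) :=
            (LipschitzWith.mk_one hF).dist_iterate_le_dist_iterate_sub z0 (hm k)
        _ = dist (F^[nk k - mk k] z0) z0 := dist_comm _ _
        _ ≤ dist (F^[nk k] z0) z0 := hrec k _ (Nat.sub_le _ _)
    exact (dist_le_dist_of_dist_eq_add_of_dist_le (hgeo k) hsegment).trans (hw k)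
  refine ⟨hnear, fun k => ?_⟩
  calc dist (F^[mk k] z0) z0 ≤ dist (F^[mk k] z0) (w k) + dist z0 (w k) := dist_triangle_right _ _ _
    _ ≤ 2 * C := by linarith [hnear k, hw k]
end

section
/- Equip the polydisc 𝔻^N with the distance k_{𝔻^N}(z,w) = max_{1≤j≤N} k_𝔻(z_j, w_j), where k_𝔻 is the Poincaré distance. Let F : 𝔻^N → 𝔻^N be 1-Lipschitz for k_{𝔻^N}, let p, q ∈ 𝔻^N, and suppose π_1(F^{∘n}(p)) → 1 as n → ∞, where π_1 is the projection to the first coordinate. Then π_1(F^{∘n}(q)) → 1 as n → ∞. -/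
/-- `artanh x = (1/2) log((1+x)/(1-x))`. -/
noncomputable def artanh (x : ℝ) : ℝ := (1 / 2) * Real.log ((1 + x) / (1 - x))

/-- The Poincaré distance on the unit disc. -/
noncomputable def kD (z w : ℂ) : ℝ :=
  artanh (‖z - w‖ / ‖1 - (starRingEnd ℂ) z * w‖)

/-- The Kobayashi distance of the polydisc: max of the coordinatewise
Poincaré distances. -/
noncomputable def kPoly {N : ℕ} [NeZero N] (z w : Fin N → ℂ) : ℝ :=
  Finset.univ.sup' (by simp [Finset.univ_nonempty]) fun j => kD (z j) (w j)

/-!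
Since `F` does not increase `k_{𝔻^N}` and `π₁` is 1-Lipschitz, the first coordinates of
`Fⁿ p` and `Fⁿ q` stay within Poincaré distance `C := k_{𝔻^N}(p, q)` of each other.
In the disc, a point `w` with `k_𝔻(z, w) ≤ C` satisfies `|w - 1| ≤ e^{2C} |z - 1|`,
so `π₁ (Fⁿ q) → 1` along with `π₁ (Fⁿ p)`.
-/

open Complex ComplexConjugate Filter Set Topology

theorem Filter.Tendsto.of_norm_sub_le_const_mul {ι E : Type*} [SeminormedAddCommGroup E]
    {l : Filter ι} {u v : ι → E} {a : E} (M : ℝ) (hu : Tendsto u l (𝓝 a))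
    (h : ∀ n, ‖v n - a‖ ≤ M * ‖u n - a‖) : Tendsto v l (𝓝 a) := by
  rw [tendsto_iff_norm_sub_tendsto_zero] at hu ⊢
  simpa using squeeze_zero (fun n => norm_nonneg _) h (by simpa using hu.const_mul M)

theorem dist_iterate_le_of_mapsTo {α : Type*} {s : Set α} {d : α → α → ℝ} {F : α → α}
    (hF : MapsTo F s s) (hd : ∀ z ∈ s, ∀ w ∈ s, d (F z) (F w) ≤ d z w)
    {z w : α} (hz : z ∈ s) (hw : w ∈ s) (n : ℕ) : d (F^[n] z) (F^[n] w) ≤ d z w := by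
  induction n with
  | zero => rfl
  | succ n ih =>
    rw [Function.iterate_succ_apply', Function.iterate_succ_apply']
    exact (hd _ (hF.iterate n hz) _ (hF.iterate n hw)).trans ih

theorem exp_two_mul_artanh {x : ℝ} (h₀ : -1 < x) (h₁ : x < 1) :
    Real.exp (2 * artanh x) = (1 + x) / (1 - x) := by
  rw [artanh, ← mul_assoc, show (2 : ℝ) * (1 / 2) = 1 by norm_num, one_mul,
    Real.exp_log (div_pos (by linarith) (by linarith))]

theorem normSq_one_sub_conj_mul_sub_normSq_sub (z w : ℂ) :
    normSq (1 - conj z * w) - normSq (z - w) = (1 - normSq z) * (1 - normSq w) := by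
  simp only [normSq_apply, sub_re, sub_im, mul_re, mul_im, conj_re, conj_im, one_re, one_im]
  ring

theorem norm_sub_lt_norm_one_sub_conj_mul {z w : ℂ} (hz : ‖z‖ < 1) (hw : ‖w‖ < 1) :
    ‖z - w‖ < ‖1 - conj z * w‖ := by
  have hz2 : normSq z < 1 := by
    rw [← Complex.sq_norm]; exact pow_lt_one₀ (norm_nonneg z) hz two_ne_zero
  have hw2 : normSq w < 1 := by
    rw [← Complex.sq_norm]; exact pow_lt_one₀ (norm_nonneg w) hw two_ne_zero
  have hsq : normSq (z - w) < normSq (1 - conj z * w) := by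
    nlinarith [normSq_one_sub_conj_mul_sub_normSq_sub z w]
  rw [← Complex.sq_norm, ← Complex.sq_norm] at hsq
  exact lt_of_pow_lt_pow_left₀ 2 (norm_nonneg _) hsq

theorem norm_one_sub_conj_mul_le {z w : ℂ} (hz : ‖z‖ ≤ 1) :
    ‖1 - conj z * w‖ ≤ ‖z - 1‖ + ‖w - 1‖ :=
  calc ‖1 - conj z * w‖ = ‖conj (1 - z) + conj z * (1 - w)‖ := by
        rw [map_sub, map_one]; ring_nf
    _ ≤ ‖conj (1 - z)‖ + ‖conj z‖ * ‖1 - w‖ :=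
        (norm_add_le _ _).trans_eq (by rw [norm_mul])
    _ ≤ ‖z - 1‖ + ‖w - 1‖ := by
        rw [norm_conj, norm_conj, norm_sub_rev 1 z, norm_sub_rev 1 w]
        gcongr
        exact mul_le_of_le_one_left (norm_nonneg _) hz

theorem norm_sub_one_le_exp_two_mul_kD_mul {z w : ℂ} (hz : ‖z‖ < 1) (hw : ‖w‖ < 1) :
    ‖w - 1‖ ≤ Real.exp (2 * kD z w) * ‖z - 1‖ := by
  have hlt := norm_sub_lt_norm_one_sub_conj_mul hz hw
  have hpos : 0 < ‖1 - conj z * w‖ := (norm_nonneg _).trans_lt hlt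
  set r := ‖z - w‖ / ‖1 - conj z * w‖ with hr
  have hr₀ : 0 ≤ r := by positivity
  have hr₁ : r < 1 := (div_lt_one hpos).mpr hlt
  have hzw : ‖z - w‖ ≤ r * (‖z - 1‖ + ‖w - 1‖) := by
    rw [hr, div_mul_eq_mul_div, le_div_iff₀ hpos]
    exact mul_le_mul_of_nonneg_left (norm_one_sub_conj_mul_le hz.le) (norm_nonneg _)
  have htri : ‖w - 1‖ ≤ ‖z - 1‖ + ‖z - w‖ := by
    simpa [norm_sub_rev w z, add_comm] using norm_sub_le_norm_sub_add_norm_sub w z 1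
  rw [kD, exp_two_mul_artanh (by linarith) hr₁, div_mul_eq_mul_div, le_div_iff₀ (by linarith)]
  -- `htri` and `hzw` give `‖w - 1‖ ≤ ‖z - 1‖ + r (‖z - 1‖ + ‖w - 1‖)`; rearrange.
  nlinarith

theorem kD_le_kPoly {N : ℕ} [NeZero N] (z w : Fin N → ℂ) (j : Fin N) :
    kD (z j) (w j) ≤ kPoly z w :=
  Finset.le_sup' (fun j => kD (z j) (w j)) (Finset.mem_univ j)

theorem polydisc_first_coordinate_convergence {N : ℕ} [NeZero N]
    (F : (Fin N → ℂ) → (Fin N → ℂ))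
    (hmaps : ∀ z : Fin N → ℂ, (∀ j, ‖z j‖ < 1) →
      ∀ j, ‖F z j‖ < 1)
    (hLip : ∀ z w : Fin N → ℂ, (∀ j, ‖z j‖ < 1) →
      (∀ j, ‖w j‖ < 1) → kPoly (F z) (F w) ≤ kPoly z w)
    (p q : Fin N → ℂ)
    (hp : ∀ j, ‖p j‖ < 1) (hq : ∀ j, ‖q j‖ < 1)
    (htend : Filter.Tendsto (fun n => (F^[n] p) 0) Filter.atTop (nhds (1 : ℂ))) :
    Filter.Tendsto (fun n => (F^[n] q) 0) Filter.atTop (nhds (1 : ℂ)) := by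
  set D : Set (Fin N → ℂ) := {z | ∀ j, ‖z j‖ < 1}
  have hD : MapsTo F D D := hmaps
  refine htend.of_norm_sub_le_const_mul (Real.exp (2 * kPoly p q)) fun n => ?_
  have hdist : kD (F^[n] p 0) (F^[n] q 0) ≤ kPoly p q :=
    (kD_le_kPoly _ _ 0).trans
      (dist_iterate_le_of_mapsTo hD (fun z hz w hw => hLip z w hz hw) hp hq n)
  calc ‖F^[n] q 0 - 1‖ ≤ Real.exp (2 * kD (F^[n] p 0) (F^[n] q 0)) * ‖F^[n] p 0 - 1‖ :=
        norm_sub_one_le_exp_two_mul_kD_mul (hD.iterate n hp 0) (hD.iterate n hq 0)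
    _ ≤ Real.exp (2 * kPoly p q) * ‖F^[n] p 0 - 1‖ := by gcongr
end
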